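/- Let ∑ a_n be a conditionally convergent series of real numbers and let A ⊆ ℕ with both A and ℕ \ A tame with respect to ∑ a_n, the subseries of a over A tending to +∞, and the subseries of a over ℕ \ A tending to -∞. If C ⊆ A and the subseries of a over C ∪ (ℕ \ A) does not converge to any real number, then the subseries of a over C ∪ (ℕ \ A) tends to -∞. -/

import Mathlib

/-!
Since the subseries over `A` tends to `+∞`, its positive part cannot be absolutely convergent,
so tameness of `A` forces its nonpositive part, and hence that of `A \ C`, to be absolutely
convergent. The subseries over `A \ C` is then a convergent series plus a series of positive
terms, so it either converges or tends to `+∞`. The subseries over `C ∪ (ℕ \ A)` is the full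
(convergent) series minus the one over `A \ C`, so it converges or tends to `-∞`.
-/

open Filter

/-- The partial sums of the subseries of `a` over `A`: `S N = ∑_{n < N, n ∈ A} a n`. -/
noncomputable def partialSum (a : ℕ → ℝ) (A : Set ℕ) (N : ℕ) : ℝ :=
  ∑ n ∈ Finset.range N, Set.indicator A a n

/-- `A` sends the series `∑ a n` to infinity: the subseries over `A` tends to `+∞` or `-∞`. -/
def SendsToInfinity (a : ℕ → ℝ) (A : Set ℕ) : Prop :=
  Tendsto (partialSum a A) atTop atTop ∨ Tendsto (partialSum a A) atTop atBot

/-- `∑ a n` is conditionally convergent: partial sums converge, but `∑ |a n| = ∞`. -/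
def CondConv (a : ℕ → ℝ) : Prop :=
  (∃ L : ℝ, Tendsto (fun N => ∑ n ∈ Finset.range N, a n) atTop (nhds L)) ∧
    ¬ Summable (fun n => |a n|)

/-- The subseries of `a` over `A` is absolutely convergent: `∑_{n ∈ A} |a n| < ∞`. -/
def AbsConvOn (a : ℕ → ℝ) (A : Set ℕ) : Prop :=
  Summable (Set.indicator A fun n => |a n|)

/-- `A` is tame w.r.t. `∑ a n` if at least one of the positive/nonpositive parts of the
subseries over `A` is absolutely convergent. -/
def Tame (a : ℕ → ℝ) (A : Set ℕ) : Prop :=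
  AbsConvOn a {n ∈ A | 0 < a n} ∨ AbsConvOn a {n ∈ A | a n ≤ 0}

variable {a : ℕ → ℝ} {S T : Set ℕ}

lemma partialSum_union (h : Disjoint S T) (N : ℕ) :
    partialSum a (S ∪ T) N = partialSum a S N + partialSum a T N := by
  simp only [partialSum, Set.indicator_union_of_disjoint h, Finset.sum_add_distrib]

lemma partialSum_univ (a : ℕ → ℝ) (N : ℕ) :
    partialSum a Set.univ N = ∑ n ∈ Finset.range N, a n := by
  simp [partialSum]

lemma partialSum_univ_diff (a : ℕ → ℝ) (S : Set ℕ) (N : ℕ) :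
    partialSum a (Set.univ \ S) N = ∑ n ∈ Finset.range N, a n - partialSum a S N := by
  rw [eq_sub_iff_add_eq, ← partialSum_union Set.disjoint_sdiff_left, Set.sdiff_union_self,
    Set.univ_union, partialSum_univ]

lemma partialSum_eq_pos_add_nonpos (a : ℕ → ℝ) (S : Set ℕ) (N : ℕ) :
    partialSum a S N = partialSum a {n ∈ S | 0 < a n} N + partialSum a {n ∈ S | a n ≤ 0} N := by
  have hdisj : Disjoint {n ∈ S | 0 < a n} {n ∈ S | a n ≤ 0} :=
    Set.disjoint_left.2 fun _ hpos hnonpos => (not_le.2 hpos.2) hnonpos.2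
  rw [← partialSum_union hdisj, ← Set.sep_or]
  simp only [lt_or_ge, and_true, Set.ofPred_mem_eq]

lemma monotone_partialSum_of_nonneg (h : ∀ n ∈ S, 0 ≤ a n) : Monotone (partialSum a S) :=
  fun _ _ hNM => Finset.sum_le_sum_of_subset_of_nonneg (Finset.range_subset_range.2 hNM)
    fun n _ _ => Set.indicator_nonneg h n

lemma partialSum_nonpos_of_nonpos (h : ∀ n ∈ S, a n ≤ 0) (N : ℕ) : partialSum a S N ≤ 0 :=
  Finset.sum_nonpos fun n _ => Set.indicator_nonpos h n

lemma AbsConvOn.mono (hST : S ⊆ T) (hT : AbsConvOn a T) : AbsConvOn a S :=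
  hT.of_nonneg_of_le (Set.indicator_nonneg fun _ _ => abs_nonneg _)
    (Set.indicator_le_indicator_of_subset hST fun _ => abs_nonneg _)

lemma AbsConvOn.tendsto_partialSum (h : AbsConvOn a S) :
    Tendsto (partialSum a S) atTop (nhds (∑' n, S.indicator a n)) := by
  have hsum : Summable (S.indicator a) := by
    refine Summable.of_abs ?_
    rw [AbsConvOn, ← Function.comp_def, Set.indicator_comp_of_zero abs_zero] at h
    exact h
  exact hsum.hasSum.tendsto_sum_nat

/-- An absolutely convergent positive part bounds the partial sums from above. -/
lemma Tame.absConvOn_nonpos_of_tendsto_atTop (hS : Tame a S)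
    (htop : Tendsto (partialSum a S) atTop atTop) : AbsConvOn a {n ∈ S | a n ≤ 0} := by
  refine hS.resolve_left fun hpos => ?_
  have hbound : ∀ N, partialSum a S N ≤ ∑' n, {n ∈ S | 0 < a n}.indicator a n := fun N => by
    have hposle := (monotone_partialSum_of_nonneg fun n hn => hn.2.le).ge_of_tendsto
      hpos.tendsto_partialSum N
    have hnonpos := partialSum_nonpos_of_nonpos (S := {n ∈ S | a n ≤ 0}) (fun n hn => hn.2) N
    linarith [partialSum_eq_pos_add_nonpos a S N]
  obtain ⟨N, hN⟩ := (htop.eventually_gt_atTop (∑' n, {n ∈ S | 0 < a n}.indicator a n)).exists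
  exact (hbound N).not_gt hN

lemma tendsto_atTop_or_exists_tendsto_of_absConvOn_nonpos (h : AbsConvOn a {n ∈ S | a n ≤ 0}) :
    Tendsto (partialSum a S) atTop atTop ∨ ∃ l, Tendsto (partialSum a S) atTop (nhds l) := by
  have hsplit : partialSum a S = partialSum a {n ∈ S | 0 < a n} + partialSum a {n ∈ S | a n ≤ 0} :=
    funext (partialSum_eq_pos_add_nonpos a S)
  rw [hsplit]
  rcases tendsto_atTop_of_monotone
      (monotone_partialSum_of_nonneg (S := {n ∈ S | 0 < a n}) fun n hn => hn.2.le) with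
    hpos_top | ⟨l, hpos⟩
  · exact .inl (hpos_top.atTop_add h.tendsto_partialSum)
  · exact .inr ⟨_, hpos.add h.tendsto_partialSum⟩

theorem balance_two_claim_two_general (a : ℕ → ℝ) (hcc : CondConv a) (A : Set ℕ)
    (hA : Tame a A)
    (htop : Tendsto (partialSum a A) atTop atTop)
    (C : Set ℕ)
    (hC : ¬ ∃ L : ℝ, Tendsto (partialSum a (C ∪ (Set.univ \ A))) atTop (nhds L)) :
    Tendsto (partialSum a (C ∪ (Set.univ \ A))) atTop atBot := by
  obtain ⟨L, hL⟩ := hcc.1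
  have hnonpos : AbsConvOn a {n ∈ A \ C | a n ≤ 0} :=
    (hA.absConvOn_nonpos_of_tendsto_atTop htop).mono fun _ hn => by exact ⟨hn.1.1, hn.2⟩
  have hrest : C ∪ (Set.univ \ A) = Set.univ \ (A \ C) := by
    rw [Set.sdiff_sdiff_right, Set.univ_inter, Set.union_comm]
  have hsub : partialSum a (Set.univ \ (A \ C))
      = fun N => ∑ n ∈ Finset.range N, a n - partialSum a (A \ C) N :=
    funext (partialSum_univ_diff a (A \ C))
  rw [hrest, hsub] at hC ⊢
  rcases tendsto_atTop_or_exists_tendsto_of_absConvOn_nonpos hnonpos with htop' | ⟨l, hl⟩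
  · simpa only [sub_eq_add_neg] using hL.add_atBot (tendsto_neg_atBot_iff.2 htop')
  · exact absurd ⟨L - l, hL.sub hl⟩ hC

/-- Claim 2 in Lemma 9: with `A` and `ℕ \ A` tame, the subseries over `A` tending to `+∞`
and over `ℕ \ A` tending to `-∞`, if `C ⊆ A` and the subseries over `C ∪ (ℕ \ A)` does not
converge, then it tends to `-∞`. -/
theorem balance_two_claim_two (a : ℕ → ℝ) (hcc : CondConv a) (A : Set ℕ)
    (hA : Tame a A) (hAc : Tame a (Set.univ \ A))
    (htop : Tendsto (partialSum a A) atTop atTop)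
    (hbot : Tendsto (partialSum a (Set.univ \ A)) atTop atBot)
    (C : Set ℕ) (hCA : C ⊆ A)
    (hC : ¬ ∃ L : ℝ, Tendsto (partialSum a (C ∪ (Set.univ \ A))) atTop (nhds L)) :
    Tendsto (partialSum a (C ∪ (Set.univ \ A))) atTop atBot :=
  balance_two_claim_two_general a hcc A hA htop C hC
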